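/- Let p be a prime and k a commutative ring with p·1 = 0, and let W = W_d(k) be the d-th Weyl algebra over k (d ≥ 1). Let R ⊆ W be the k-subalgebra generated by t_1, …, t_d. Then the centralizer A := Z_W(R) = { x ∈ W : x·r = r·x for all r ∈ R } equals the k-subalgebra of W generated by t_1, …, t_d, ∂_1^p, …, ∂_d^p, and W is a free left A-module of rank p^d with basis the monomials ∂^J = ∂_1^{j_1}⋯∂_d^{j_d}, where each j_r ranges over {0, 1, …, p−1}. -/

import Mathlib

/-!
Let `W` act on `k[x, y]` (variables `x_i = X (inl i)`, `y_i = X (inr i)`) by `t_i ↦ x_i ·` and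
`∂_i ↦ ∂/∂x_i + y_i ·`. Evaluating at `1` sends the normally ordered monomial `t^I ∂^J` to
`x^I y^J`, and these monomials span `W`, so `w ↦ w · 1` is injective. Under this normal symbol,
left multiplication by `t_i` is multiplication by `x_i`, right multiplication by `t_i` is
`x_i · + ∂/∂y_i`, and right multiplication by `∂^J` is multiplication by `y^J`.

Hence `w` commutes with every `t_i` iff its symbol is killed by all `∂/∂y_i`, which in
characteristic `p` means that every `y`-exponent is divisible by `p`; such symbols come from
combinations of `t^I ∂^{pQ}`, which lie in `k[t, ∂^p]`, and `∂_i^p` commutes with `t_i` because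
`[∂_i^p, t_i] = p ∂_i^{p-1}`. Freeness comes from splitting each `y`-exponent uniquely into a
multiple of `p` plus a residue `J < p`.
-/

noncomputable section

/-- The defining relations of the `d`-th Weyl algebra: `t_i t_j = t_j t_i`,
`∂_i ∂_j = ∂_j ∂_i` and `∂_i t_j = t_j ∂_i + δ_{ij}`. -/
inductive WeylRel (k : Type*) [CommRing k] (d : ℕ) :
    FreeAlgebra k (Fin d ⊕ Fin d) → FreeAlgebra k (Fin d ⊕ Fin d) → Prop
  | tt (i j : Fin d) :
      WeylRel k d (FreeAlgebra.ι k (Sum.inl i) * FreeAlgebra.ι k (Sum.inl j))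
        (FreeAlgebra.ι k (Sum.inl j) * FreeAlgebra.ι k (Sum.inl i))
  | dd (i j : Fin d) :
      WeylRel k d (FreeAlgebra.ι k (Sum.inr i) * FreeAlgebra.ι k (Sum.inr j))
        (FreeAlgebra.ι k (Sum.inr j) * FreeAlgebra.ι k (Sum.inr i))
  | dt (i j : Fin d) :
      WeylRel k d (FreeAlgebra.ι k (Sum.inr i) * FreeAlgebra.ι k (Sum.inl j))
        (FreeAlgebra.ι k (Sum.inl j) * FreeAlgebra.ι k (Sum.inr i) + if i = j then 1 else 0)

/-- The `d`-th Weyl algebra over `k`: the free algebra on `t_1,…,t_d,∂_1,…,∂_d` modulo the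
two-sided ideal generated by the Weyl relations. -/
abbrev WeylAlgebra (k : Type*) [CommRing k] (d : ℕ) := RingQuot (WeylRel k d)

namespace WeylAlgebra

variable (k : Type*) [CommRing k] (d : ℕ)

/-- The generator `t_i` of the Weyl algebra. -/
def t (i : Fin d) : WeylAlgebra k d :=
  RingQuot.mkAlgHom k (WeylRel k d) (FreeAlgebra.ι k (Sum.inl i))

/-- The generator `∂_i` of the Weyl algebra. -/
def del (i : Fin d) : WeylAlgebra k d :=
  RingQuot.mkAlgHom k (WeylRel k d) (FreeAlgebra.ι k (Sum.inr i))

/-- The monomial `t^I = t_1^{i_1} ⋯ t_d^{i_d}` in the Weyl algebra. -/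
def monomialT (I : Fin d → ℕ) : WeylAlgebra k d :=
  ((List.finRange d).map fun i => t k d i ^ I i).prod

/-- The monomial `∂^J = ∂_1^{j_1} ⋯ ∂_d^{j_d}` in the Weyl algebra. -/
def monomialD (J : Fin d → ℕ) : WeylAlgebra k d :=
  ((List.finRange d).map fun i => del k d i ^ J i).prod

end WeylAlgebra

theorem List.prod_map_pow_add_of_commute {ι M : Type*} [Monoid M] {g : ι → M}
    (hg : ∀ i j, Commute (g i) (g j)) (L : List ι) (J J' : ι → ℕ) :
    (L.map fun i => g i ^ (J i + J' i)).prod =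
      (L.map fun i => g i ^ J i).prod * (L.map fun i => g i ^ J' i).prod := by
  induction L with
  | nil => simp
  | cons a L ih =>
    have hcomm : Commute (g a ^ J' a) (L.map fun i => g i ^ J i).prod :=
      Commute.list_prod_right _ _ fun x hx => by
        obtain ⟨i, -, rfl⟩ := List.mem_map.1 hx
        exact (hg a i).pow_pow _ _
    rw [List.map_cons, List.map_cons, List.map_cons, List.prod_cons, List.prod_cons,
      List.prod_cons, ih, pow_add, mul_assoc, ← mul_assoc (g a ^ J' a), hcomm.eq, mul_assoc,
      mul_assoc]

theorem MvPolynomial.pderiv_pderiv_comm {R σ : Type*} [CommRing R] (i j : σ)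
    (f : MvPolynomial σ R) : pderiv i (pderiv j f) = pderiv j (pderiv i f) := by
  have hbracket : ⁅pderiv i, pderiv j⁆ = (0 : Derivation R (MvPolynomial σ R) _) :=
    derivation_ext fun v => by
      classical
      rw [Derivation.commutator_apply]
      simp [Pi.single_apply, apply_ite]
  rw [← sub_eq_zero, ← Derivation.commutator_apply, hbracket, Derivation.zero_apply]

theorem isUnit_natCast_of_not_dvd {R : Type*} [CommRing R] {p n : ℕ} (hp : p.Prime)
    (hchar : (p : R) = 0) (hn : ¬p ∣ n) : IsUnit (n : R) := by
  have hcop : IsCoprime (n : ℤ) (p : ℤ) :=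
    Nat.isCoprime_iff_coprime.2 (Nat.coprime_comm.1 (hp.coprime_iff_not_dvd.2 hn))
  exact isCoprime_zero_right.1 (by simpa [hchar] using hcop.map (Int.castRingHom R))

theorem Subalgebra.centralizer_coe_adjoin {R A : Type*} [CommSemiring R] [Semiring A]
    [Algebra R A] (s : Set A) :
    Subalgebra.centralizer R (Algebra.adjoin R s : Set A) = Subalgebra.centralizer R s :=
  le_antisymm (Subalgebra.centralizer_le R _ _ Algebra.subset_adjoin)
    fun _ hz _ hg => (Algebra.adjoin_le_centralizer_centralizer R s hg _ hz).symm

namespace WeylAlgebra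

open MvPolynomial

variable {k : Type*} [CommRing k] {d p : ℕ}

section Relations

theorem commute_t_t (i j : Fin d) : Commute (t k d i) (t k d j) := by
  simpa only [Commute, SemiconjBy, map_mul, t] using RingQuot.mkAlgHom_rel k (WeylRel.tt i j)

theorem commute_del_del (i j : Fin d) : Commute (del k d i) (del k d j) := by
  simpa only [Commute, SemiconjBy, map_mul, del] using RingQuot.mkAlgHom_rel k (WeylRel.dd i j)

theorem del_mul_t (i j : Fin d) :
    del k d i * t k d j = t k d j * del k d i + if i = j then 1 else 0 := by
  simpa only [map_mul, map_add, apply_ite, map_one, map_zero, t, del]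
    using RingQuot.mkAlgHom_rel k (WeylRel.dt (k := k) i j)

theorem commute_del_t {i j : Fin d} (h : i ≠ j) : Commute (del k d i) (t k d j) := by
  simpa only [Commute, SemiconjBy, if_neg h, add_zero] using del_mul_t (k := k) i j

theorem del_pow_mul_t (i : Fin d) (n : ℕ) :
    del k d i ^ n * t k d i = t k d i * del k d i ^ n + n • del k d i ^ (n - 1) := by
  induction n with
  | zero => simp
  | succ n ih =>
    have hpow : n • del k d i ^ (n - 1) * del k d i = n • del k d i ^ n := by
      cases n <;> simp [pow_succ, mul_assoc]
    calc del k d i ^ (n + 1) * t k d i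
        = del k d i ^ n * t k d i * del k d i + del k d i ^ n := by
          rw [pow_succ, mul_assoc, del_mul_t, if_pos rfl, mul_add, mul_one, ← mul_assoc]
      _ = t k d i * del k d i ^ (n + 1) + (n + 1) • del k d i ^ n := by
          rw [ih, add_mul, hpow, mul_assoc, ← pow_succ, add_assoc, succ_nsmul]

theorem commute_del_pow_t (hchar : (p : k) = 0) (i j : Fin d) :
    Commute (del k d i ^ p) (t k d j) := by
  rcases eq_or_ne i j with rfl | h
  · rw [Commute, SemiconjBy, del_pow_mul_t, ← Nat.cast_smul_eq_nsmul k, hchar, zero_smul,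
      add_zero]
  · exact (commute_del_t h).pow_left p

theorem monomialT_add (I I' : Fin d → ℕ) :
    monomialT k d (I + I') = monomialT k d I * monomialT k d I' :=
  List.prod_map_pow_add_of_commute commute_t_t _ I I'

theorem monomialD_add (J J' : Fin d → ℕ) :
    monomialD k d (J + J') = monomialD k d J * monomialD k d J' :=
  List.prod_map_pow_add_of_commute commute_del_del _ J J'

@[simp]
theorem monomialT_zero : monomialT k d 0 = 1 := by
  simp [monomialT]

@[simp]
theorem monomialD_zero : monomialD k d 0 = 1 := by
  simp [monomialD]

theorem monomialT_single (i : Fin d) (n : ℕ) : monomialT k d (Pi.single i n) = t k d i ^ n := by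
  rw [monomialT, List.prod_map_eq_pow_single i _ fun j hj _ => by simp [hj],
    List.count_finRange, pow_one, Pi.single_eq_same]

theorem monomialD_single (i : Fin d) (n : ℕ) :
    monomialD k d (Pi.single i n) = del k d i ^ n := by
  rw [monomialD, List.prod_map_eq_pow_single i _ fun j hj _ => by simp [hj],
    List.count_finRange, pow_one, Pi.single_eq_same]

theorem monomialD_eq_mul_del_pow (J : Fin d → ℕ) (i : Fin d) :
    monomialD k d J = monomialD k d (Function.update J i 0) * del k d i ^ J i := by
  rw [← monomialD_single, ← monomialD_add]
  congr 1
  ext r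
  rcases eq_or_ne r i with rfl | h <;> simp [*]

theorem commute_t_monomialD {J : Fin d → ℕ} {i : Fin d} (hJ : J i = 0) :
    Commute (t k d i) (monomialD k d J) :=
  Commute.list_prod_right _ _ fun x hx => by
    obtain ⟨r, -, rfl⟩ := List.mem_map.1 hx
    rcases eq_or_ne r i with rfl | h
    · simp [hJ]
    · exact ((commute_del_t h).pow_left _).symm

theorem monomialD_mul_t (J : Fin d → ℕ) (i : Fin d) :
    monomialD k d J * t k d i =
      t k d i * monomialD k d J + J i • monomialD k d (Function.update J i (J i - 1)) := by
  have hlower := monomialD_eq_mul_del_pow (k := k) (Function.update J i (J i - 1)) i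
  rw [Function.update_idem, Function.update_self] at hlower
  rw [hlower, monomialD_eq_mul_del_pow J i, mul_assoc, del_pow_mul_t, mul_add, ← mul_assoc,
    ← (commute_t_monomialD (Function.update_self i 0 J)).eq, mul_assoc, mul_smul_comm]

end Relations

section YExponents

def yExp (J : Fin d → ℕ) : Fin d ⊕ Fin d →₀ ℕ :=
  Finsupp.equivFunOnFinite.symm (Sum.elim 0 J)

@[simp]
theorem yExp_inl (J : Fin d → ℕ) (i : Fin d) : yExp J (Sum.inl i) = 0 := rfl

@[simp]
theorem yExp_inr (J : Fin d → ℕ) (i : Fin d) : yExp J (Sum.inr i) = J i := rfl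

variable (k d p) in
def yDvdSubmodule : Submodule k (MvPolynomial (Fin d ⊕ Fin d) k) :=
  restrictSupport k {u | ∀ i, p ∣ u (Sum.inr i)}

theorem coeff_sum_mul_monomial_yExp {f : (Fin d → Fin p) → MvPolynomial (Fin d ⊕ Fin d) k}
    (hf : ∀ J, f J ∈ yDvdSubmodule k d p) {v : Fin d ⊕ Fin d →₀ ℕ}
    (hv : ∀ i, p ∣ v (Sum.inr i)) (J : Fin d → Fin p) :
    coeff (v + yExp fun i => (J i : ℕ)) (∑ J', f J' * monomial (yExp fun i => (J' i : ℕ)) 1) =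
      coeff v (f J) := by
  rw [coeff_sum, Finset.sum_eq_single J _ (by simp), coeff_mul_monomial', if_pos le_add_self,
    add_tsub_cancel_right, mul_one]
  intro J' _ hne
  rw [coeff_mul_monomial']
  split_ifs with hle
  -- at a coordinate where `J'` and `J` differ, `p ∣ v` would force `J' ≡ J [MOD p]`
  · obtain ⟨i, hi⟩ := Function.ne_iff.1 hne
    refine mul_eq_zero_of_left (notMem_support_iff.1 fun hmem => hi ?_) _
    have hdvd := hf J' hmem i
    have hle_i := hle (Sum.inr i)
    simp only [Finsupp.coe_tsub, Finsupp.coe_add, Pi.sub_apply, Pi.add_apply, yExp_inr]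
      at hdvd hle_i
    refine Fin.ext (Nat.ModEq.eq_of_lt_of_lt ?_ (J' i).isLt (J i).isLt)
    exact ((Nat.modEq_iff_dvd' hle_i).2 hdvd).trans
      (((Nat.modEq_zero_iff_dvd.2 (hv i)).add_right _).trans (by rw [zero_add]))
  · rfl

theorem eq_zero_of_sum_mul_monomial_yExp_eq_zero
    {f : (Fin d → Fin p) → MvPolynomial (Fin d ⊕ Fin d) k}
    (hf : ∀ J, f J ∈ yDvdSubmodule k d p)
    (hsum : ∑ J, f J * monomial (yExp fun i => (J i : ℕ)) 1 = 0) (J : Fin d → Fin p) :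
    f J = 0 := by
  ext v
  by_cases hv : ∀ i, p ∣ v (Sum.inr i)
  · rw [← coeff_sum_mul_monomial_yExp hf hv, hsum, coeff_zero, coeff_zero]
  · exact notMem_support_iff.1 fun hmem => hv (hf J hmem)

theorem mem_yDvdSubmodule_of_pderiv_eq_zero (hp : p.Prime) (hchar : (p : k) = 0)
    {f : MvPolynomial (Fin d ⊕ Fin d) k} (hf : ∀ i, pderiv (Sum.inr i) f = 0) :
    f ∈ yDvdSubmodule k d p := by
  intro u hu i
  by_contra hndvd
  have hpos : 1 ≤ u (Sum.inr i) := Nat.one_le_iff_ne_zero.2 fun h0 => hndvd (h0 ▸ dvd_zero p)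
  have hcoeff := congrArg (coeff (u - Finsupp.single (Sum.inr i) 1)) (hf i)
  rw [coeff_pderiv, tsub_add_cancel_of_le (Finsupp.single_le_iff.2 hpos), coeff_zero] at hcoeff
  have hsucc : (u - Finsupp.single (Sum.inr i) 1 : Fin d ⊕ Fin d →₀ ℕ) (Sum.inr i) + 1 =
      u (Sum.inr i) := by
    simp only [Finsupp.coe_tsub, Pi.sub_apply, Finsupp.single_eq_same]
    omega
  rw [← Nat.cast_add_one, hsucc] at hcoeff
  exact mem_support_iff.1 hu
    ((isUnit_natCast_of_not_dvd hp hchar hndvd).mul_left_eq_zero.1 hcoeff)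

end YExponents

section NormalSymbol

def generatorOp : Fin d ⊕ Fin d → Module.End k (MvPolynomial (Fin d ⊕ Fin d) k) :=
  Sum.elim (fun i => Algebra.lmul k _ (X (Sum.inl i)))
    (fun i => (pderiv (Sum.inl i)).toLinearMap + Algebra.lmul k _ (X (Sum.inr i)))

theorem lift_generatorOp_eq_of_weylRel {a b : FreeAlgebra k (Fin d ⊕ Fin d)}
    (h : WeylRel k d a b) :
    FreeAlgebra.lift k (generatorOp (k := k)) a = FreeAlgebra.lift k generatorOp b := by
  induction h with
  | tt i j =>
    rw [map_mul, map_mul]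
    simp only [FreeAlgebra.lift_ι_apply, generatorOp, Sum.elim_inl, ← map_mul, mul_comm]
  | dd i j =>
    rw [map_mul, map_mul]
    refine LinearMap.ext fun f => ?_
    simp [generatorOp, pderiv_pderiv_comm (R := k) (Sum.inl i)]
    ring
  | dt i j =>
    rw [map_add, map_mul, map_mul]
    refine LinearMap.ext fun f => ?_
    rcases eq_or_ne i j with rfl | h
    · simp [generatorOp]
      ring
    · simp [generatorOp, h, h.symm]
      ring

variable (k d) in
def polyRep : WeylAlgebra k d →ₐ[k] Module.End k (MvPolynomial (Fin d ⊕ Fin d) k) :=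
  RingQuot.liftAlgHom k
    ⟨FreeAlgebra.lift k generatorOp, fun _ _ => lift_generatorOp_eq_of_weylRel⟩

theorem polyRep_t (i : Fin d) : polyRep k d (t k d i) = Algebra.lmul k _ (X (Sum.inl i)) := by
  simp [polyRep, t, generatorOp]

theorem polyRep_del (i : Fin d) :
    polyRep k d (del k d i) =
      (pderiv (Sum.inl i)).toLinearMap + Algebra.lmul k _ (X (Sum.inr i)) := by
  simp [polyRep, del, generatorOp]

variable (k d) in
def xFreeSubalgebra : Subalgebra k (MvPolynomial (Fin d ⊕ Fin d) k) where
  carrier := {f | ∀ i, pderiv (Sum.inl i) f = 0}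
  mul_mem' {f g} hf hg i := by simp [hf i, hg i]
  add_mem' {f g} hf hg i := by simp [hf i, hg i]
  algebraMap_mem' r i := by simp [MvPolynomial.algebraMap_eq]

theorem X_inr_mem_xFreeSubalgebra (i : Fin d) : X (Sum.inr i) ∈ xFreeSubalgebra k d :=
  fun _ => pderiv_X_of_ne Sum.inr_ne_inl

theorem polyRep_del_pow_apply_of_mem {f : MvPolynomial (Fin d ⊕ Fin d) k}
    (hf : f ∈ xFreeSubalgebra k d) (i : Fin d) (n : ℕ) :
    polyRep k d (del k d i ^ n) f = X (Sum.inr i) ^ n * f := by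
  induction n with
  | zero => simp
  | succ n ih =>
    have hmem : X (Sum.inr i) ^ n * f ∈ xFreeSubalgebra k d :=
      mul_mem (pow_mem (X_inr_mem_xFreeSubalgebra i) n) hf
    rw [pow_succ', map_mul, Module.End.mul_apply, ih, polyRep_del, LinearMap.add_apply,
      Derivation.coeFn_coe, hmem i, zero_add, Algebra.coe_lmul_eq_mul, LinearMap.mul_apply',
      ← mul_assoc, ← pow_succ']

theorem polyRep_monomialD_apply_of_mem {f : MvPolynomial (Fin d ⊕ Fin d) k}
    (hf : f ∈ xFreeSubalgebra k d) (J : Fin d → ℕ) :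
    polyRep k d (monomialD k d J) f = (∏ i, X (Sum.inr i) ^ J i) * f := by
  rw [monomialD, Fin.prod_univ_def]
  induction List.finRange d with
  | nil => simp
  | cons a L ih =>
    have hmem : (L.map fun i => X (Sum.inr i) ^ J i).prod * f ∈ xFreeSubalgebra k d :=
      mul_mem (list_prod_mem fun _ hx => by
        obtain ⟨i, -, rfl⟩ := List.mem_map.1 hx
        exact pow_mem (X_inr_mem_xFreeSubalgebra i) _) hf
    rw [List.map_cons, List.prod_cons, map_mul, Module.End.mul_apply, ih,
      polyRep_del_pow_apply_of_mem hmem, List.map_cons, List.prod_cons, mul_assoc]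

theorem polyRep_monomialT (I : Fin d → ℕ) :
    polyRep k d (monomialT k d I) = Algebra.lmul k _ (∏ i, X (Sum.inl i) ^ I i) := by
  rw [monomialT, map_list_prod, Fin.prod_univ_def, map_list_prod, List.map_map, List.map_map]
  exact congrArg _ (List.map_congr_left fun i _ => by
    simp only [Function.comp_apply, map_pow, polyRep_t])

variable (k d) in
def normalSymbol : WeylAlgebra k d →ₗ[k] MvPolynomial (Fin d ⊕ Fin d) k :=
  LinearMap.applyₗ 1 ∘ₗ (polyRep k d).toLinearMap

theorem normalSymbol_apply (w : WeylAlgebra k d) : normalSymbol k d w = polyRep k d w 1 := rfl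

theorem normalSymbol_mul (w w' : WeylAlgebra k d) :
    normalSymbol k d (w * w') = polyRep k d w (normalSymbol k d w') := by
  simp [normalSymbol_apply]

variable (k d) in
def normalMonomial (u : Fin d ⊕ Fin d →₀ ℕ) : WeylAlgebra k d :=
  monomialT k d (fun i => u (Sum.inl i)) * monomialD k d (fun i => u (Sum.inr i))

theorem normalSymbol_normalMonomial (u : Fin d ⊕ Fin d →₀ ℕ) :
    normalSymbol k d (normalMonomial k d u) = monomial u 1 := by
  rw [normalMonomial, normalSymbol_mul, normalSymbol_apply,
    polyRep_monomialD_apply_of_mem (one_mem _), mul_one, polyRep_monomialT,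
    Algebra.coe_lmul_eq_mul, LinearMap.mul_apply', ← Fintype.prod_sum_type (fun v => X v ^ u v),
    monomial_eq, C_1, one_mul, Finsupp.prod_fintype _ _ fun _ => pow_zero _]

@[simp]
theorem normalMonomial_zero : normalMonomial k d 0 = 1 := by
  simp [normalMonomial, ← Pi.zero_def]

theorem normalMonomial_add_yExp (u : Fin d ⊕ Fin d →₀ ℕ) (J : Fin d → ℕ) :
    normalMonomial k d (u + yExp J) = normalMonomial k d u * monomialD k d J := by
  rw [normalMonomial, normalMonomial, mul_assoc, ← monomialD_add]
  congr 2

theorem normalMonomial_mul_t (u : Fin d ⊕ Fin d →₀ ℕ) (i : Fin d) :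
    normalMonomial k d u * t k d i =
      normalMonomial k d (u + Finsupp.single (Sum.inl i) 1) +
        u (Sum.inr i) • normalMonomial k d (u - Finsupp.single (Sum.inr i) 1) := by
  rw [normalMonomial, mul_assoc, monomialD_mul_t, mul_add, ← mul_assoc, ← pow_one (t k d i),
    ← monomialT_single, ← monomialT_add, mul_smul_comm, normalMonomial, normalMonomial]
  classical
  congr 1
  · congr 2 <;> ext r <;> simp [Finsupp.single_apply, Pi.single_apply, eq_comm]
  · congr 3 <;> ext r <;> simp only [Finsupp.coe_tsub, Pi.sub_apply, Finsupp.single_apply,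
      Function.update_apply, Sum.inr.injEq, reduceCtorEq, if_false, tsub_zero]
    rcases eq_or_ne r i with rfl | h
    · simp
    · simp [h, h.symm]

theorem adjoin_t_del_eq_top :
    Algebra.adjoin k (Set.range (t k d) ∪ Set.range (del k d)) = ⊤ := by
  have hgen : Set.range (t k d) ∪ Set.range (del k d) =
      RingQuot.mkAlgHom k (WeylRel k d) '' Set.range (FreeAlgebra.ι k) := by
    rw [← Set.Sum.elim_range, ← Set.range_comp]
    congr 1
    ext (i | i) <;> rfl
  rw [hgen, Algebra.adjoin_image, FreeAlgebra.adjoin_range_ι, Algebra.map_top,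
    AlgHom.range_eq_top]
  exact RingQuot.mkAlgHom_surjective k _

theorem span_normalMonomial : Submodule.span k (Set.range (normalMonomial k d)) = ⊤ := by
  set S := Submodule.span k (Set.range (normalMonomial k d))
  have hgen : ∀ g ∈ Set.range (t k d) ∪ Set.range (del k d), ∀ s ∈ S, s * g ∈ S := by
    intro g hg s hs
    induction hs using Submodule.span_induction with
    | mem x hx =>
      obtain ⟨u, rfl⟩ := hx
      rcases hg with ⟨i, rfl⟩ | ⟨i, rfl⟩
      · rw [normalMonomial_mul_t]
        exact add_mem (Submodule.subset_span ⟨_, rfl⟩)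
          (Submodule.smul_of_tower_mem _ _ (Submodule.subset_span ⟨_, rfl⟩))
      · rw [← pow_one (del k d i), ← monomialD_single, ← normalMonomial_add_yExp]
        exact Submodule.subset_span ⟨_, rfl⟩
    | zero => simp
    | add x y _ _ hx hy => rw [add_mul]; exact add_mem hx hy
    | smul r x _ hx => rw [smul_mul_assoc]; exact S.smul_mem r hx
  have hmul : ∀ w, ∀ s ∈ S, s * w ∈ S := fun w => by
    have hw : w ∈ Algebra.adjoin k (Set.range (t k d) ∪ Set.range (del k d)) := by
      rw [adjoin_t_del_eq_top]; trivial
    induction hw using Algebra.adjoin_induction with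
    | mem g hg => exact hgen g hg
    | algebraMap r =>
      intro s hs
      rw [← Algebra.commutes, ← Algebra.smul_def]
      exact S.smul_mem r hs
    | add x y _ _ hx hy => intro s hs; rw [mul_add]; exact add_mem (hx s hs) (hy s hs)
    | mul x y _ _ hx hy => intro s hs; rw [← mul_assoc]; exact hy _ (hx s hs)
  refine eq_top_iff.2 fun w _ => ?_
  simpa using hmul w 1 (normalMonomial_zero (k := k) (d := d) ▸ Submodule.subset_span ⟨0, rfl⟩)

theorem normalSymbol_injective : Function.Injective (normalSymbol k d) := by
  let inverse := (basisMonomials (Fin d ⊕ Fin d) k).constr k (normalMonomial k d)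
  have hinv : inverse ∘ₗ normalSymbol k d = LinearMap.id :=
    LinearMap.ext_on_range span_normalMonomial fun u => by
      simpa [normalSymbol_normalMonomial, coe_basisMonomials] using
        (basisMonomials (Fin d ⊕ Fin d) k).constr_basis k (normalMonomial k d) u
  exact Function.LeftInverse.injective (g := inverse) (LinearMap.congr_fun hinv)

theorem normalSymbol_t_mul (i : Fin d) (w : WeylAlgebra k d) :
    normalSymbol k d (t k d i * w) = X (Sum.inl i) * normalSymbol k d w := by
  rw [normalSymbol_mul, polyRep_t, Algebra.coe_lmul_eq_mul, LinearMap.mul_apply']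

theorem normalSymbol_mul_t (w : WeylAlgebra k d) (i : Fin d) :
    normalSymbol k d (w * t k d i) =
      X (Sum.inl i) * normalSymbol k d w + pderiv (Sum.inr i) (normalSymbol k d w) := by
  have h : normalSymbol k d ∘ₗ LinearMap.mulRight k (t k d i) =
      (Algebra.lmul k _ (X (Sum.inl i)) + (pderiv (Sum.inr i)).toLinearMap) ∘ₗ
        normalSymbol k d :=
    LinearMap.ext_on_range span_normalMonomial fun u => by
      rw [LinearMap.comp_apply, LinearMap.mulRight_apply, normalMonomial_mul_t, map_add,
        map_nsmul]
      simp only [LinearMap.comp_apply, LinearMap.add_apply, normalSymbol_normalMonomial,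
        Algebra.coe_lmul_eq_mul, LinearMap.mul_apply', Derivation.coeFn_coe, pderiv_monomial, X,
        monomial_mul, smul_monomial, nsmul_one, one_mul, add_comm]
  exact LinearMap.congr_fun h w

theorem normalSymbol_mul_monomialD (w : WeylAlgebra k d) (J : Fin d → ℕ) :
    normalSymbol k d (w * monomialD k d J) = normalSymbol k d w * monomial (yExp J) 1 := by
  have h : normalSymbol k d ∘ₗ LinearMap.mulRight k (monomialD k d J) =
      LinearMap.mulRight k (monomial (yExp J) 1) ∘ₗ normalSymbol k d :=
    LinearMap.ext_on_range span_normalMonomial fun u => by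
      simp [← normalMonomial_add_yExp, normalSymbol_normalMonomial, monomial_mul]
  exact LinearMap.congr_fun h w

end NormalSymbol

variable (k d p) in
abbrev adjoinTDelPow : Subalgebra k (WeylAlgebra k d) :=
  Algebra.adjoin k (Set.range (t k d) ∪ Set.range fun i => del k d i ^ p)

theorem adjoinTDelPow_le_centralizer (hchar : (p : k) = 0) :
    adjoinTDelPow k d p ≤ Subalgebra.centralizer k (Set.range (t k d)) := by
  refine Algebra.adjoin_le ?_
  rintro _ (⟨j, rfl⟩ | ⟨j, rfl⟩) _ ⟨i, rfl⟩
  exacts [commute_t_t i j, (commute_del_pow_t hchar j i).symm]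

theorem normalSymbol_mem_yDvdSubmodule_of_mem_centralizer (hp : p.Prime) (hchar : (p : k) = 0)
    {w : WeylAlgebra k d} (hw : w ∈ Subalgebra.centralizer k (Set.range (t k d))) :
    normalSymbol k d w ∈ yDvdSubmodule k d p := by
  refine mem_yDvdSubmodule_of_pderiv_eq_zero hp hchar fun i => ?_
  have h := congrArg (normalSymbol k d) ((Subalgebra.mem_centralizer_iff k).1 hw _ ⟨i, rfl⟩)
  rwa [normalSymbol_t_mul, normalSymbol_mul_t, left_eq_add] at h

theorem normalMonomial_mem_adjoinTDelPow {u : Fin d ⊕ Fin d →₀ ℕ}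
    (hu : ∀ i, p ∣ u (Sum.inr i)) : normalMonomial k d u ∈ adjoinTDelPow k d p := by
  refine mul_mem (list_prod_mem fun _ hx => ?_) (list_prod_mem fun _ hx => ?_) <;>
    obtain ⟨i, -, rfl⟩ := List.mem_map.1 hx <;> dsimp only
  · exact pow_mem (Algebra.subset_adjoin (.inl ⟨i, rfl⟩)) _
  · rw [← Nat.mul_div_cancel' (hu i), pow_mul]
    exact pow_mem (Algebra.subset_adjoin (.inr ⟨i, rfl⟩)) _

theorem mem_adjoinTDelPow_of_normalSymbol_mem {w : WeylAlgebra k d}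
    (hw : normalSymbol k d w ∈ yDvdSubmodule k d p) : w ∈ adjoinTDelPow k d p := by
  let S : Set (Fin d ⊕ Fin d →₀ ℕ) := {u | ∀ i, p ∣ u (Sum.inr i)}
  have himage : (monomial · (1 : k)) '' S = normalSymbol k d '' (normalMonomial k d '' S) := by
    rw [Set.image_image]
    exact Set.image_congr fun u _ => (normalSymbol_normalMonomial u).symm
  rw [yDvdSubmodule, restrictSupport_eq_span, himage, ← Submodule.map_span] at hw
  obtain ⟨w', hw', heq⟩ := hw
  rw [← normalSymbol_injective heq]
  refine (Submodule.span_le (p := Subalgebra.toSubmodule (adjoinTDelPow k d p))).2 ?_ hw'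
  rintro _ ⟨u, hu, rfl⟩
  exact normalMonomial_mem_adjoinTDelPow hu

theorem centralizer_eq_adjoinTDelPow (hp : p.Prime) (hchar : (p : k) = 0) :
    Subalgebra.centralizer k (Algebra.adjoin k (Set.range (t k d)) : Set (WeylAlgebra k d)) =
      adjoinTDelPow k d p := by
  rw [Subalgebra.centralizer_coe_adjoin]
  exact le_antisymm
    (fun _ hw => mem_adjoinTDelPow_of_normalSymbol_mem
      (normalSymbol_mem_yDvdSubmodule_of_mem_centralizer hp hchar hw))
    (adjoinTDelPow_le_centralizer hchar)

theorem injective_linearCombination_monomialD (hp : p.Prime) (hchar : (p : k) = 0) :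
    Function.Injective (Fintype.linearCombination (adjoinTDelPow k d p)
      fun J : Fin d → Fin p => monomialD k d fun i => (J i : ℕ)) := by
  refine (injective_iff_map_eq_zero _).2 fun c hc => funext fun J => ?_
  have hmem : ∀ J, normalSymbol k d (c J) ∈ yDvdSubmodule k d p := fun J =>
    normalSymbol_mem_yDvdSubmodule_of_mem_centralizer hp hchar
      (adjoinTDelPow_le_centralizer hchar (c J).2)
  have hsum := congrArg (normalSymbol k d) hc
  simp only [Fintype.linearCombination_apply, Subalgebra.smul_def, smul_eq_mul, map_sum,
    normalSymbol_mul_monomialD, map_zero] at hsum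
  refine Subtype.ext (normalSymbol_injective ?_)
  rw [eq_zero_of_sum_mul_monomial_yExp_eq_zero hmem hsum J, Pi.zero_apply,
    ZeroMemClass.coe_zero, map_zero]

theorem surjective_linearCombination_monomialD (hp : p.Prime) :
    Function.Surjective (Fintype.linearCombination (adjoinTDelPow k d p)
      fun J : Fin d → Fin p => monomialD k d fun i => (J i : ℕ)) := by
  rw [← LinearMap.range_eq_top, eq_top_iff]
  rintro w -
  have hw : w ∈ Submodule.span k (Set.range (normalMonomial k d)) := by
    rw [span_normalMonomial]; trivial
  induction hw using Submodule.span_induction with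
  | mem x hx =>
    obtain ⟨u, rfl⟩ := hx
    let J : Fin d → Fin p := fun i => ⟨u (Sum.inr i) % p, Nat.mod_lt _ hp.pos⟩
    have hle : yExp (fun i => (J i : ℕ)) ≤ u :=
      Finsupp.le_def.2 fun v => by cases v <;> simp [J, Nat.mod_le]
    have hdvd : ∀ i, p ∣ (u - yExp fun i => (J i : ℕ)) (Sum.inr i) := fun i => by
      simp [J, Nat.dvd_sub_mod]
    refine ⟨Pi.single J ⟨_, normalMonomial_mem_adjoinTDelPow hdvd⟩, ?_⟩
    rw [Fintype.linearCombination_apply_single, Subalgebra.smul_def, smul_eq_mul,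
      ← normalMonomial_add_yExp, tsub_add_cancel_of_le hle]
  | zero => exact zero_mem _
  | add x y _ _ hx hy => exact add_mem hx hy
  | smul r x _ hx => exact Submodule.smul_of_tower_mem _ r hx

end WeylAlgebra

open WeylAlgebra in
theorem weylAlgebra_centralizer_and_free_general (p : ℕ) (hp : p.Prime)
    (k : Type*) [CommRing k] (hchar : (p : k) = 0) (d : ℕ) :
    Subalgebra.centralizer k
        ((Algebra.adjoin k (Set.range (t k d)) : Subalgebra k (WeylAlgebra k d)) :
          Set (WeylAlgebra k d)) =
      Algebra.adjoin k
        ((Set.range (t k d)) ∪ (Set.range fun i : Fin d => del k d i ^ p)) ∧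
    ∀ w : WeylAlgebra k d,
      ∃! c : (Fin d → Fin p) →
          Algebra.adjoin k
            ((Set.range (t k d)) ∪ (Set.range fun i : Fin d => del k d i ^ p)),
        w = ∑ J : Fin d → Fin p,
          (c J : WeylAlgebra k d) * monomialD k d fun i => (J i : ℕ) := by
  refine ⟨centralizer_eq_adjoinTDelPow hp hchar, fun w => ?_⟩
  obtain ⟨c, hc, huniq⟩ :=
    (Function.Bijective.existsUnique ⟨injective_linearCombination_monomialD hp hchar,
      surjective_linearCombination_monomialD hp⟩) w
  exact ⟨c, hc.symm, fun c' hc' => huniq c' hc'.symm⟩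

open WeylAlgebra in
/-- In characteristic `p`, the centralizer `A` of `k[t_1,…,t_d]` in the `d`-th Weyl algebra
`W` is the `k`-subalgebra generated by `t_1,…,t_d,∂_1^p,…,∂_d^p`, and `W` is a free left
`A`-module of rank `p^d` with basis the monomials `∂^J` with exponents in `{0,…,p−1}`. -/
theorem weylAlgebra_centralizer_and_free (p : ℕ) (hp : p.Prime)
    (k : Type*) [CommRing k] (hchar : (p : k) = 0) (d : ℕ) (hd : 1 ≤ d) :
    Subalgebra.centralizer k
        ((Algebra.adjoin k (Set.range (t k d)) : Subalgebra k (WeylAlgebra k d)) :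
          Set (WeylAlgebra k d)) =
      Algebra.adjoin k
        ((Set.range (t k d)) ∪ (Set.range fun i : Fin d => del k d i ^ p)) ∧
    ∀ w : WeylAlgebra k d,
      ∃! c : (Fin d → Fin p) →
          Algebra.adjoin k
            ((Set.range (t k d)) ∪ (Set.range fun i : Fin d => del k d i ^ p)),
        w = ∑ J : Fin d → Fin p,
          (c J : WeylAlgebra k d) * monomialD k d fun i => (J i : ℕ) :=
  weylAlgebra_centralizer_and_free_general p hp k hchar d
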